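/- There exists exactly one function v ∈ C²([0,∞)) such that v''(x) + f(v(x)) = 0 for all x ≥ 0, v(0) = 0, v' > 0 on [0,∞), and v(x) → 1 as x → ∞; this function v_* satisfies v_*'(x)² = F(v_*(x)) − F(1) for all x ≥ 0 (with F(1) < 0). Moreover, for every b ≥ 0 the set Z_active(b) := { z ≤ 0 : v_*(−z) = b·v_*'(−z) } is nonempty. -/

import Mathlib

/-!
Write `G u = F u - F 1`, where `F = Fint f`. The equation `v'' + f v = 0` conserves the energy
`(v')² - G v`, and under (F) the function `G` is positive on `[0, 1)` and vanishes to second order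
at `1`. A solution increasing from `0` to `1` has zero energy, since a positive limit of `v'` is
incompatible with `v → 1`; hence `v' = √(G v)`, and `v` is the inverse of the travel time
`T u = ∫₀ᵘ dt / √(G t)`. Conversely this inverse solves the equation, on all of `[0, ∞)` because
`G u ≤ K (1 - u)²` makes `T` diverge logarithmically at `1`. For `b ≥ 0`, the function `v - b v'`
is `≤ 0` at `0` and tends to `1`, so it vanishes somewhere, which gives a point of `Z_active(b)`.
-/

open Set Filter MeasureTheory

noncomputable def Fint (f : ℝ → ℝ) (u : ℝ) : ℝ := -2 * ∫ s in (0:ℝ)..u, f s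

structure CondF (f : ℝ → ℝ) (α θ lam : ℝ) : Prop where
  smooth : ContDiff ℝ 1 f
  f_zero : f 0 = 0
  df_zero : deriv f 0 < 0
  lam_def : lam = Real.sqrt (-(deriv f 0))
  alpha_pos : 0 < α
  alpha_lt : α < 1
  neg_low : ∀ s ∈ Set.Ioo (0:ℝ) α, f s < 0
  pos_mid : ∀ s ∈ Set.Ioo α (1:ℝ), 0 < f s
  neg_high : ∀ s ∈ Set.Ioi (1:ℝ), f s < 0
  df_bdd : BddBelow (deriv f '' Set.Ioi (1:ℝ))
  theta_gt : α < θ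
  theta_lt : θ < 1
  F_theta : Fint f θ = 0

def Zground (b : ℝ) (V : ℝ → ℝ) : Set ℝ := {z | V (-z) = b * deriv V (-z)}

def Zactive (b : ℝ) (v : ℝ → ℝ) : Set ℝ := {z | z ≤ 0 ∧ v (-z) = b * deriv v (-z)}

open Topology

theorem strictMonoOn_Ioo_of_hasDerivAt_pos {T T' : ℝ → ℝ} {a b : ℝ}
    (hT : ∀ u ∈ Ioo a b, HasDerivAt T (T' u) u) (hT' : ∀ u ∈ Ioo a b, 0 < T' u) :
    StrictMonoOn T (Ioo a b) :=
  strictMonoOn_of_hasDerivWithinAt_pos (convex_Ioo a b)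
    (fun u hu => (hT u hu).continuousAt.continuousWithinAt)
    (fun u hu => (hT u (interior_subset hu)).hasDerivWithinAt)
    (fun u hu => hT' u (interior_subset hu))

theorem image_Ioo_mem_nhds {T : ℝ → ℝ} {a b u : ℝ} (hT : ContinuousOn T (Ioo a b))
    (hmono : StrictMonoOn T (Ioo a b)) (hu : u ∈ Ioo a b) : T '' Ioo a b ∈ 𝓝 (T u) := by
  obtain ⟨u₁, hau₁, hu₁u⟩ := exists_between hu.1
  obtain ⟨u₂, huu₂, hu₂b⟩ := exists_between hu.2
  have hsub : Icc u₁ u₂ ⊆ Ioo a b := Icc_subset_Ioo hau₁ hu₂b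
  refine mem_of_superset (Ioo_mem_nhds (hmono (hsub ⟨le_rfl, (hu₁u.trans huu₂).le⟩) hu hu₁u)
    (hmono hu (hsub ⟨(hu₁u.trans huu₂).le, le_rfl⟩) huu₂)) ?_
  exact (intermediate_value_Ioo (hu₁u.trans huu₂).le (hT.mono hsub)).trans
    (image_mono (Ioo_subset_Icc_self.trans hsub))

theorem hasDerivAt_invFunOn {T T' : ℝ → ℝ} {a b u : ℝ}
    (hT : ∀ u ∈ Ioo a b, HasDerivAt T (T' u) u) (hT' : ∀ u ∈ Ioo a b, 0 < T' u)
    (hu : u ∈ Ioo a b) : HasDerivAt (Function.invFunOn T (Ioo a b)) (T' u)⁻¹ (T u) := by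
  have hcont : ContinuousOn T (Ioo a b) := fun u hu => (hT u hu).continuousAt.continuousWithinAt
  have hmono : StrictMonoOn T (Ioo a b) := strictMonoOn_Ioo_of_hasDerivAt_pos hT hT'
  have hinv : LeftInvOn (Function.invFunOn T (Ioo a b)) T (Ioo a b) :=
    hmono.injOn.leftInvOn_invFunOn
  have hcontinv : ContinuousAt (Function.invFunOn T (Ioo a b)) (T u) := by
    refine continuousAt_of_monotoneOn_of_image_mem_nhds ?_ (image_Ioo_mem_nhds hcont hmono hu) ?_
    · rintro _ ⟨u₁, hu₁, rfl⟩ _ ⟨u₂, hu₂, rfl⟩ h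
      rw [hinv hu₁, hinv hu₂]
      exact (hmono.le_iff_le hu₁ hu₂).1 h
    · rw [hinv.image_image, hinv hu]
      exact Ioo_mem_nhds hu.1 hu.2
  refine HasDerivAt.of_local_left_inverse hcontinv (by rw [hinv hu]; exact hT u hu)
    (hT' u hu).ne' ?_
  filter_upwards [image_Ioo_mem_nhds hcont hmono hu]
  rintro _ ⟨u', hu', rfl⟩
  rw [hinv hu']

theorem Ici_subset_image_of_tendsto_atTop {T : ℝ → ℝ} {c b : ℝ} (hcb : c < b)
    (hT : ContinuousOn T (Ico c b)) (htop : Tendsto T (𝓝[<] b) atTop) :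
    Ici (T c) ⊆ T '' Ico c b := by
  intro x hx
  obtain ⟨u, hxu, hu⟩ := ((htop.eventually_gt_atTop x).and (Ioo_mem_nhdsLT hcb)).exists
  have hsub : Icc c u ⊆ Ico c b := Icc_subset_Ico_right hu.2
  exact image_mono hsub (intermediate_value_Icc hu.1.le (hT.mono hsub) ⟨hx, hxu.le⟩)

theorem contDiffOn_two_of_hasDerivAt_deriv {v v'' : ℝ → ℝ} {U : Set ℝ} (hU : IsOpen U)
    (hv : DifferentiableOn ℝ v U) (hv' : ∀ x ∈ U, HasDerivAt (deriv v) (v'' x) x)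
    (hv'' : ContinuousOn v'' U) : ContDiffOn ℝ 2 v U := by
  refine (contDiffOn_succ_iff_deriv_of_isOpen (n := 1) hU).2 ⟨hv, by simp, ?_⟩
  refine (contDiffOn_succ_iff_deriv_of_isOpen (n := 0) hU).2
    ⟨fun x hx => (hv' x hx).differentiableAt.differentiableWithinAt, by simp, ?_⟩
  exact contDiffOn_zero.2 (hv''.congr fun x hx => (hv' x hx).deriv)

theorem nonpos_of_tendsto_of_tendsto_deriv {w : ℝ → ℝ} {L d : ℝ}
    (hdiff : ∀ᶠ x in atTop, DifferentiableAt ℝ w x) (hw : Tendsto w atTop (𝓝 L))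
    (hd : Tendsto (deriv w) atTop (𝓝 d)) : d ≤ 0 := by
  by_contra! hpos
  obtain ⟨X, hX⟩ :=
    ((hd.eventually (lt_mem_nhds (half_lt_self hpos))).and hdiff).exists_forall_of_atTop
  have hgrowth : ∀ y ≥ X, w X + d / 2 * (y - X) ≤ w y := by
    intro y hy
    have := (convex_Ici X).mul_sub_le_image_sub_of_le_deriv
      (fun z hz => (hX z hz).2.continuousAt.continuousWithinAt)
      (fun z hz => (hX z (interior_subset hz)).2.differentiableWithinAt)
      (fun z hz => (hX z (interior_subset hz)).1.le) X self_mem_Ici y hy hy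
    linarith
  have hlin : Tendsto (fun y => w X + d / 2 * (y - X)) atTop atTop :=
    tendsto_atTop_add_const_left _ _
      ((tendsto_atTop_add_const_right _ (-X) tendsto_id).const_mul_atTop (half_pos hpos))
  exact not_tendsto_atTop_of_tendsto_nhds hw
    (tendsto_atTop_mono' _ ((eventually_ge_atTop X).mono hgrowth) hlin)

theorem eq_of_hasDerivAt_eq_zero_Ioi {φ : ℝ → ℝ} {c x : ℝ} (hc : ContinuousOn φ (Ici c))
    (hd : ∀ y > c, HasDerivAt φ 0 y) (hx : c ≤ x) : φ x = φ c := by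
  have hint : ∀ y ∈ interior (Ici c), HasDerivWithinAt φ 0 (interior (Ici c)) y := by
    intro y hy
    rw [interior_Ici] at hy ⊢
    exact (hd y hy).hasDerivWithinAt
  exact le_antisymm
    (antitoneOn_of_hasDerivWithinAt_nonpos (convex_Ici c) hc hint (fun _ _ => le_rfl)
      self_mem_Ici hx hx)
    (monotoneOn_of_hasDerivWithinAt_nonneg (convex_Ici c) hc hint (fun _ _ => le_rfl)
      self_mem_Ici hx hx)

theorem hasDerivAt_Fint {f : ℝ → ℝ} (hf : Continuous f) (u : ℝ) :
    HasDerivAt (Fint f) (-2 * f u) u :=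
  (intervalIntegral.integral_hasDerivAt_right (hf.intervalIntegrable 0 u)
    hf.aestronglyMeasurable.stronglyMeasurableAtFilter hf.continuousAt).const_mul (-2)

theorem Fint_sub_Fint_le_mul_sq {f : ℝ → ℝ} {K : NNReal} {u b : ℝ} (hf : Continuous f)
    (hfb : f b = 0) (hK : LipschitzOnWith K f (Icc u b)) (hub : u ≤ b) :
    Fint f u - Fint f b ≤ K * (b - u) ^ 2 := by
  set H : ℝ → ℝ := fun s => K * (b - s) ^ 2 - (Fint f s - Fint f b)
  have hH : ∀ s, HasDerivAt H (2 * (f s - K * (b - s))) s := by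
    intro s
    refine (((((hasDerivAt_id' s).const_sub b).fun_pow 2).const_mul (K : ℝ)).sub
      ((hasDerivAt_Fint hf s).sub_const (Fint f b))).congr_deriv ?_
    ring
  have hanti : AntitoneOn H (Icc u b) := by
    refine antitoneOn_of_hasDerivWithinAt_nonpos (convex_Icc u b)
      (fun s _ => (hH s).continuousAt.continuousWithinAt) (fun s _ => (hH s).hasDerivWithinAt)
      fun s hs => ?_
    rw [interior_Icc] at hs
    have hlip := hK.dist_le_mul s (Ioo_subset_Icc_self hs) b (right_mem_Icc.2 hub)
    rw [hfb, Real.dist_eq, Real.dist_eq, sub_zero, abs_sub_comm, abs_of_pos (sub_pos.2 hs.2)]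
      at hlip
    nlinarith [le_abs_self (f s)]
  have := hanti (left_mem_Icc.2 hub) (right_mem_Icc.2 hub) hub
  simp only [H, sub_self, zero_pow two_ne_zero, mul_zero] at this
  linarith

namespace CondF

variable {f : ℝ → ℝ} {α θ lam : ℝ}

theorem f_one (hf : CondF f α θ lam) : f 1 = 0 := by
  have hcont : Tendsto f (𝓝 1) (𝓝 (f 1)) := hf.smooth.continuous.tendsto 1
  refine le_antisymm ?_ ?_
  · exact le_of_tendsto (hcont.mono_left nhdsWithin_le_nhds)
      (eventually_nhdsWithin_of_forall fun s hs => (hf.neg_high s hs).le)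
  · exact ge_of_tendsto (hcont.mono_left nhdsWithin_le_nhds)
      (mem_of_superset (Ioo_mem_nhdsLT hf.alpha_lt) fun s hs => (hf.pos_mid s hs).le)

theorem Fint_one_lt_of_mem_Ico (hf : CondF f α θ lam) {u : ℝ} (hu : u ∈ Ico α 1) :
    Fint f 1 < Fint f u := by
  have hint := hf.smooth.continuous.intervalIntegrable (μ := volume)
  have hpos : 0 < ∫ s in u..1, f s :=
    intervalIntegral.intervalIntegral_pos_of_pos_on (hint u 1)
      (fun s hs => hf.pos_mid s ⟨hu.1.trans_lt hs.1, hs.2⟩) hu.2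
  have hsplit := intervalIntegral.integral_interval_sub_left (hint 0 1) (hint 0 u)
  simp only [Fint]
  linarith

theorem Fint_one_neg (hf : CondF f α θ lam) : Fint f 1 < 0 :=
  hf.F_theta ▸ hf.Fint_one_lt_of_mem_Ico ⟨hf.theta_gt.le, hf.theta_lt⟩

theorem Fint_nonneg_of_mem_Icc (hf : CondF f α θ lam) {u : ℝ} (hu : u ∈ Icc 0 α) :
    0 ≤ Fint f u := by
  have hderiv := hasDerivAt_Fint hf.smooth.continuous
  have hmono : MonotoneOn (Fint f) (Icc 0 α) := by
    refine monotoneOn_of_hasDerivWithinAt_nonneg (convex_Icc 0 α)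
      (fun s _ => (hderiv s).continuousAt.continuousWithinAt)
      (fun s _ => (hderiv s).hasDerivWithinAt) fun s hs => ?_
    rw [interior_Icc] at hs
    linarith [hf.neg_low s hs]
  simpa [Fint] using hmono ⟨le_rfl, hf.alpha_pos.le⟩ hu hu.1

theorem Fint_one_lt (hf : CondF f α θ lam) {u : ℝ} (hu : u ∈ Ico 0 1) : Fint f 1 < Fint f u := by
  rcases le_or_gt u α with h | h
  · exact hf.Fint_one_neg.trans_le (hf.Fint_nonneg_of_mem_Icc ⟨hu.1, h⟩)
  · exact hf.Fint_one_lt_of_mem_Ico ⟨h.le, hu.2⟩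

theorem exists_neg_forall_Ioo_Fint_one_lt (hf : CondF f α θ lam) :
    ∃ a < 0, ∀ u ∈ Ioo a 1, Fint f 1 < Fint f u := by
  have hnear : ∀ᶠ u in 𝓝 0, Fint f 1 < Fint f u :=
    continuousAt_const.eventually_lt (hasDerivAt_Fint hf.smooth.continuous 0).continuousAt
      (hf.Fint_one_lt ⟨le_rfl, one_pos⟩)
  obtain ⟨a, r, ⟨ha, hr⟩, hsub⟩ := mem_nhds_iff_exists_Ioo_subset.1 hnear
  refine ⟨a, ha, fun u hu => ?_⟩
  rcases lt_or_ge u 0 with h | h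
  · exact hsub ⟨hu.1, h.trans hr⟩
  · exact hf.Fint_one_lt ⟨h, hu.2⟩

theorem exists_Fint_sub_le_mul_sq (hf : CondF f α θ lam) :
    ∃ K : ℝ, ∀ u ∈ Ico 0 1, Fint f u - Fint f 1 ≤ K * (1 - u) ^ 2 := by
  obtain ⟨K, hK⟩ := hf.smooth.contDiffOn.exists_lipschitzOnWith one_ne_zero (convex_Icc 0 1)
    isCompact_Icc
  exact ⟨K, fun u hu => Fint_sub_Fint_le_mul_sq hf.smooth.continuous hf.f_one
    (hK.mono (Icc_subset_Icc_left hu.1)) hu.2.le⟩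

end CondF

-- The time a solution of `v' = √(G v)` with `v 0 = 0` needs to reach the value `u`.
noncomputable def travelTime (G : ℝ → ℝ) (u : ℝ) : ℝ := ∫ t in (0:ℝ)..u, (√(G t))⁻¹

@[simp]
theorem travelTime_zero (G : ℝ → ℝ) : travelTime G 0 = 0 := intervalIntegral.integral_same

theorem hasDerivAt_travelTime {G : ℝ → ℝ} {a b u : ℝ} (hG : ContinuousOn G (Ioo a b))
    (hpos : ∀ t ∈ Ioo a b, 0 < G t) (h0 : 0 ∈ Ioo a b) (hu : u ∈ Ioo a b) :
    HasDerivAt (travelTime G) (√(G u))⁻¹ u := by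
  have hρ : ContinuousOn (fun t => (√(G t))⁻¹) (Ioo a b) :=
    hG.sqrt.inv₀ fun t ht => (Real.sqrt_pos.2 (hpos t ht)).ne'
  exact intervalIntegral.integral_hasDerivAt_right
    ((hρ.mono (ordConnected_Ioo.uIcc_subset h0 hu)).intervalIntegrable)
    (hρ.stronglyMeasurableAtFilter isOpen_Ioo u hu) (hρ.continuousAt (Ioo_mem_nhds hu.1 hu.2))

theorem tendsto_travelTime_atTop {G : ℝ → ℝ} {K : ℝ} (hG : ContinuousOn G (Ico 0 1))
    (hpos : ∀ u ∈ Ico 0 1, 0 < G u) (hle : ∀ u ∈ Ico 0 1, G u ≤ K * (1 - u) ^ 2) :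
    Tendsto (travelTime G) (𝓝[<] 1) atTop := by
  have hK : 0 < √K := Real.sqrt_pos.2 <| by
    simpa using (hpos 0 ⟨le_rfl, one_pos⟩).trans_le (hle 0 ⟨le_rfl, one_pos⟩)
  have hlower : ∀ u ∈ Ico (0:ℝ) 1, (√K)⁻¹ * -Real.log (1 - u) ≤ travelTime G u := by
    intro u hu
    have hsub : Icc 0 u ⊆ Ico 0 1 := Icc_subset_Ico_right hu.2
    have h1t : ∀ t ∈ Icc 0 u, 0 < 1 - t := fun t ht => sub_pos.2 (hsub ht).2
    have hlog : ∫ t in (0:ℝ)..u, (1 - t)⁻¹ = -Real.log (1 - u) := by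
      rw [intervalIntegral.integral_comp_sub_left (fun t => t⁻¹), sub_zero, integral_inv,
        one_div, Real.log_inv]
      rw [uIcc_of_le (by linarith [hu.1])]
      exact fun h => (sub_pos.2 hu.2).not_ge h.1
    calc (√K)⁻¹ * -Real.log (1 - u) = ∫ t in (0:ℝ)..u, (√K)⁻¹ * (1 - t)⁻¹ := by
          rw [intervalIntegral.integral_const_mul, hlog]
      _ ≤ travelTime G u := by
        refine intervalIntegral.integral_mono_on hu.1 ?_ ?_ fun t ht => ?_
        · exact (continuousOn_const.mul ((continuousOn_const.sub continuousOn_id).inv₀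
            fun t ht => (h1t t ht).ne')).intervalIntegrable_of_Icc hu.1
        · exact ((hG.mono hsub).sqrt.inv₀ fun t ht => (Real.sqrt_pos.2 (hpos t (hsub ht))).ne'
            ).intervalIntegrable_of_Icc hu.1
        · rw [← mul_inv, ← Real.sqrt_sq (h1t t ht).le, ← Real.sqrt_mul' _ (sq_nonneg _)]
          exact inv_anti₀ (Real.sqrt_pos.2 (hpos t (hsub ht)))
            (Real.sqrt_le_sqrt (hle t (hsub ht)))
  have hsub_one : Tendsto (fun u : ℝ => 1 - u) (𝓝[<] 1) (𝓝[>] 0) := by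
    refine tendsto_nhdsWithin_of_tendsto_nhds_of_eventually_within _ ?_
      (eventually_nhdsWithin_of_forall fun _ hu => sub_pos.2 (mem_Iio.1 hu))
    simpa using ((continuous_sub_left (1:ℝ)).tendsto 1).mono_left nhdsWithin_le_nhds
  refine tendsto_atTop_mono' _ (eventually_of_mem (Ico_mem_nhdsLT one_pos) hlower) ?_
  exact (tendsto_neg_atBot_atTop.comp (Real.tendsto_log_nhdsGT_zero.comp hsub_one)).const_mul_atTop
    (inv_pos.2 hK)

section TravelTime

variable {G : ℝ → ℝ} {a b u : ℝ} (hG : ContinuousOn G (Ioo a b)) (hpos : ∀ t ∈ Ioo a b, 0 < G t)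
  (h0 : 0 ∈ Ioo a b)
include hG hpos h0

theorem strictMonoOn_travelTime : StrictMonoOn (travelTime G) (Ioo a b) :=
  strictMonoOn_Ioo_of_hasDerivAt_pos (fun _ hu => hasDerivAt_travelTime hG hpos h0 hu)
    fun t ht => inv_pos.2 (Real.sqrt_pos.2 (hpos t ht))

theorem isOpen_image_travelTime : IsOpen (travelTime G '' Ioo a b) := by
  refine isOpen_iff_mem_nhds.2 ?_
  rintro _ ⟨u, hu, rfl⟩
  exact image_Ioo_mem_nhds (fun t ht => (hasDerivAt_travelTime hG hpos h0 ht).continuousAt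
    |>.continuousWithinAt) (strictMonoOn_travelTime hG hpos h0) hu

theorem invFunOn_travelTime_apply (hu : u ∈ Ioo a b) :
    Function.invFunOn (travelTime G) (Ioo a b) (travelTime G u) = u :=
  (strictMonoOn_travelTime hG hpos h0).injOn.leftInvOn_invFunOn hu

theorem hasDerivAt_invFunOn_travelTime (hu : u ∈ Ioo a b) :
    HasDerivAt (Function.invFunOn (travelTime G) (Ioo a b)) (√(G u)) (travelTime G u) := by
  simpa using hasDerivAt_invFunOn (fun _ ht => hasDerivAt_travelTime hG hpos h0 ht)
    (fun t ht => inv_pos.2 (Real.sqrt_pos.2 (hpos t ht))) hu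

theorem hasDerivAt_deriv_invFunOn_travelTime {g : ℝ} (hG' : HasDerivAt G g u)
    (hu : u ∈ Ioo a b) :
    HasDerivAt (deriv (Function.invFunOn (travelTime G) (Ioo a b))) (g / 2) (travelTime G u) := by
  set v := Function.invFunOn (travelTime G) (Ioo a b)
  have hvT : ∀ t ∈ Ioo a b, v (travelTime G t) = t := fun t ht =>
    invFunOn_travelTime_apply hG hpos h0 ht
  have hderiv : deriv v =ᶠ[𝓝 (travelTime G u)] fun x => √(G (v x)) := by
    filter_upwards [(isOpen_image_travelTime hG hpos h0).mem_nhds (mem_image_of_mem _ hu)]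
    rintro _ ⟨t, ht, rfl⟩
    rw [(hasDerivAt_invFunOn_travelTime hG hpos h0 ht).deriv, hvT t ht]
  have hsqrt : HasDerivAt (fun y => √(G y)) (g / (2 * √(G u))) (v (travelTime G u)) := by
    rw [hvT u hu]
    exact hG'.sqrt (hpos u hu).ne'
  refine ((hsqrt.comp _ (hasDerivAt_invFunOn_travelTime hG hpos h0 hu)).congr_deriv ?_)
    |>.congr_of_eventuallyEq hderiv
  field_simp [(Real.sqrt_pos.2 (hpos u hu)).ne']

end TravelTime

def IsMonotoneProfile (f v : ℝ → ℝ) : Prop :=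
  ContDiffOn ℝ 2 v (Ici 0) ∧ (∀ x ≥ (0:ℝ), deriv (deriv v) x + f (v x) = 0) ∧
    v 0 = 0 ∧ (∀ x ≥ (0:ℝ), 0 < deriv v x) ∧ Tendsto v atTop (𝓝 1)

section Existence

-- Positivity of `G` slightly below `0` makes the inverse of the travel time differentiable at `0`
-- in the two-sided sense that `deriv` requires.
variable {f G : ℝ → ℝ} {a : ℝ} (hG : ContinuousOn G (Ioo a 1)) (hpos : ∀ t ∈ Ioo a 1, 0 < G t)
  (ha : a < 0) (htop : Tendsto (travelTime G) (𝓝[<] 1) atTop)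
include hG hpos ha htop

theorem Ici_subset_image_travelTime : Ici 0 ⊆ travelTime G '' Ioo a 1 := by
  have hsub : Ico (0:ℝ) 1 ⊆ Ioo a 1 := fun u hu => ⟨ha.trans_le hu.1, hu.2⟩
  have := Ici_subset_image_of_tendsto_atTop one_pos (fun u hu =>
    (hasDerivAt_travelTime hG hpos ⟨ha, one_pos⟩ (hsub hu)).continuousAt.continuousWithinAt) htop
  rw [travelTime_zero] at this
  exact this.trans (image_mono hsub)

theorem deriv_invFunOn_travelTime {x : ℝ} (hx : 0 ≤ x) :
    deriv (Function.invFunOn (travelTime G) (Ioo a 1)) x =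
      √(G (Function.invFunOn (travelTime G) (Ioo a 1) x)) := by
  obtain ⟨u, hu, rfl⟩ := Ici_subset_image_travelTime hG hpos ha htop hx
  rw [(hasDerivAt_invFunOn_travelTime hG hpos ⟨ha, one_pos⟩ hu).deriv,
    invFunOn_travelTime_apply hG hpos ⟨ha, one_pos⟩ hu]

theorem tendsto_invFunOn_travelTime :
    Tendsto (Function.invFunOn (travelTime G) (Ioo a 1)) atTop (𝓝 1) := by
  have h0 : (0:ℝ) ∈ Ioo a 1 := ⟨ha, one_pos⟩
  have hsurj := Ici_subset_image_travelTime hG hpos ha htop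
  refine tendsto_order.2 ⟨fun c hc => ?_, fun c hc => ?_⟩
  · have hc' : max c 0 ∈ Ioo a 1 := ⟨ha.trans_le (le_max_right c 0), max_lt hc one_pos⟩
    filter_upwards [eventually_ge_atTop 0, eventually_gt_atTop (travelTime G (max c 0))]
      with x hx hcx
    obtain ⟨u, hu, rfl⟩ := hsurj hx
    rw [invFunOn_travelTime_apply hG hpos h0 hu]
    exact (le_max_left c 0).trans_lt
      ((strictMonoOn_travelTime hG hpos h0).lt_iff_lt hc' hu |>.1 hcx)
  · filter_upwards [eventually_ge_atTop 0] with x hx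
    obtain ⟨u, hu, rfl⟩ := hsurj hx
    rw [invFunOn_travelTime_apply hG hpos h0 hu]
    exact hu.2.trans hc

end Existence

theorem isMonotoneProfile_invFunOn_travelTime {f G : ℝ → ℝ} {a : ℝ} (hf : Continuous f)
    (hG' : ∀ u, HasDerivAt G (-2 * f u) u) (hpos : ∀ t ∈ Ioo a 1, 0 < G t) (ha : a < 0)
    (htop : Tendsto (travelTime G) (𝓝[<] 1) atTop) :
    IsMonotoneProfile f (Function.invFunOn (travelTime G) (Ioo a 1)) := by
  have hG : ContinuousOn G (Ioo a 1) := fun u _ => (hG' u).continuousAt.continuousWithinAt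
  set v := Function.invFunOn (travelTime G) (Ioo a 1)
  have h0 : (0:ℝ) ∈ Ioo a 1 := ⟨ha, one_pos⟩
  have hsurj := Ici_subset_image_travelTime hG hpos ha htop
  have hvT : ∀ t ∈ Ioo a 1, v (travelTime G t) = t := fun t ht =>
    invFunOn_travelTime_apply hG hpos h0 ht
  have hv : ∀ u ∈ Ioo a 1, HasDerivAt v (√(G u)) (travelTime G u) :=
    fun u hu => hasDerivAt_invFunOn_travelTime hG hpos h0 hu
  have hv' : ∀ u ∈ Ioo a 1, HasDerivAt (deriv v) (-f u) (travelTime G u) := fun u hu =>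
    (hasDerivAt_deriv_invFunOn_travelTime hG hpos h0 (hG' u) hu).congr_deriv (by ring)
  have hdiff : DifferentiableOn ℝ v (travelTime G '' Ioo a 1) := by
    rintro _ ⟨u, hu, rfl⟩
    exact (hv u hu).differentiableAt.differentiableWithinAt
  refine ⟨?_, fun x hx => ?_, by simpa using hvT 0 h0,
    fun x hx => ?_, tendsto_invFunOn_travelTime hG hpos ha htop⟩
  · refine (contDiffOn_two_of_hasDerivAt_deriv (isOpen_image_travelTime hG hpos h0) hdiff
      (v'' := fun x => -f (v x)) ?_ (hf.comp_continuousOn hdiff.continuousOn).neg).mono hsurj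
    rintro _ ⟨u, hu, rfl⟩
    simpa only [hvT u hu] using hv' u hu
  · obtain ⟨u, hu, rfl⟩ := hsurj hx
    rw [(hv' u hu).deriv, hvT u hu, neg_add_cancel]
  · obtain ⟨u, hu, rfl⟩ := hsurj hx
    rw [(hv u hu).deriv]
    exact Real.sqrt_pos.2 (hpos u hu)

namespace IsMonotoneProfile

variable {f w : ℝ → ℝ} (hw : IsMonotoneProfile f w)
include hw

theorem strictMonoOn : StrictMonoOn w (Ici 0) := by
  obtain ⟨hC2, -, -, hpos, -⟩ := hw
  exact strictMonoOn_of_deriv_pos (convex_Ici 0) hC2.continuousOn fun x hx =>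
    hpos x (interior_subset hx)

theorem mem_Ico {x : ℝ} (hx : 0 ≤ x) : w x ∈ Ico 0 1 := by
  have hmono := hw.strictMonoOn
  obtain ⟨-, -, h0, -, hlim⟩ := hw
  have hle : w (x + 1) ≤ 1 := ge_of_tendsto hlim <| (eventually_ge_atTop (x + 1)).mono
    fun y hy => hmono.monotoneOn (by simp; linarith) (by simp; linarith) hy
  refine ⟨h0 ▸ hmono.monotoneOn self_mem_Ici hx hx, ?_⟩
  exact (hmono hx (by simp; linarith) (lt_add_one x)).trans_le hle

theorem hasDerivAt {x : ℝ} (hx : 0 < x) : HasDerivAt w (deriv w x) x := by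
  obtain ⟨hC2, -, -, -, -⟩ := hw
  exact (((hC2.mono Ioi_subset_Ici_self).differentiableOn two_ne_zero x hx).differentiableAt
    (isOpen_Ioi.mem_nhds hx)).hasDerivAt

theorem hasDerivAt_deriv {x : ℝ} (hx : 0 < x) : HasDerivAt (deriv w) (-f (w x)) x := by
  obtain ⟨hC2, hode, -, -, -⟩ := hw
  have hC1 : ContDiffOn ℝ 1 (deriv w) (Ioi 0) :=
    (hC2.mono Ioi_subset_Ici_self).deriv_of_isOpen isOpen_Ioi (by norm_num)
  rw [← eq_neg_of_add_eq_zero_left (hode x hx.le)]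
  exact ((hC1.differentiableOn one_ne_zero x hx).differentiableAt
    (isOpen_Ioi.mem_nhds hx)).hasDerivAt

theorem deriv_sq_eq {G : ℝ → ℝ} (hG : ∀ u, HasDerivAt G (-2 * f u) u) (hG1 : G 1 = 0)
    {x : ℝ} (hx : 0 < x) : deriv w x ^ 2 = G (w x) := by
  have ⟨_, _, _, hpos, hlim⟩ := hw
  set E : ℝ → ℝ := fun y => deriv w y ^ 2 - G (w y)
  have hE : ∀ y > 0, HasDerivAt E 0 y := fun y hy =>
    (((hw.hasDerivAt_deriv hy).fun_pow 2).sub ((hG (w y)).comp y (hw.hasDerivAt hy))).congr_deriv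
      (by ring)
  have hEconst : ∀ y > 0, E y = E 1 := fun y hy =>
    isOpen_Ioi.is_const_of_deriv_eq_zero isPreconnected_Ioi
      (fun z hz => (hE z hz).differentiableAt.differentiableWithinAt)
      (fun z hz => (hE z hz).deriv) hy (mem_Ioi.2 one_pos)
  have hsq : Tendsto (fun y => deriv w y ^ 2) atTop (𝓝 (E 1)) := by
    have hGw : Tendsto (fun y => E 1 + G (w y)) atTop (𝓝 (E 1)) := by
      simpa [hG1] using ((hG 1).continuousAt.tendsto.comp hlim).const_add (E 1)
    refine hGw.congr' ((eventually_gt_atTop 0).mono fun y hy => ?_)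
    have := hEconst y hy
    simp only [E] at this ⊢
    linarith
  have hroot : Tendsto (deriv w) atTop (𝓝 (√(E 1))) :=
    hsq.sqrt.congr' ((eventually_gt_atTop 0).mono fun y hy => Real.sqrt_sq (hpos y hy.le).le)
  have hE1 : E 1 = 0 := le_antisymm
    (Real.sqrt_eq_zero'.1 (le_antisymm (nonpos_of_tendsto_of_tendsto_deriv
      ((eventually_gt_atTop 0).mono fun y hy => (hw.hasDerivAt hy).differentiableAt)
      hlim hroot) (Real.sqrt_nonneg _)))
    (ge_of_tendsto' hsq fun y => sq_nonneg _)
  have := hEconst x hx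
  simp only [E] at this
  linarith

theorem travelTime_eq {G : ℝ → ℝ} {a : ℝ} (hG : ∀ u, HasDerivAt G (-2 * f u) u) (hG1 : G 1 = 0)
    (ha : a < 0) (hpos : ∀ u ∈ Ioo a 1, 0 < G u) {x : ℝ} (hx : 0 ≤ x) :
    travelTime G (w x) = x := by
  have ⟨hC2, _, h0, hwpos, _⟩ := hw
  have hT : ∀ y ≥ (0:ℝ), HasDerivAt (travelTime G) (√(G (w y)))⁻¹ (w y) := fun y hy =>
    hasDerivAt_travelTime (fun u _ => (hG u).continuousAt.continuousWithinAt) hpos ⟨ha, one_pos⟩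
      ⟨ha.trans_le (hw.mem_Ico hy).1, (hw.mem_Ico hy).2⟩
  have hcont : ContinuousOn (fun y => travelTime G (w y) - y) (Ici 0) := fun y hy =>
    ((hT y hy).continuousAt.comp_continuousWithinAt (hC2.continuousOn y hy)).sub
      continuousWithinAt_id
  have hderiv : ∀ y > (0:ℝ), HasDerivAt (fun y => travelTime G (w y) - y) 0 y := by
    intro y hy
    have hw' : deriv w y = √(G (w y)) := by
      rw [← hw.deriv_sq_eq hG hG1 hy, Real.sqrt_sq (hwpos y hy.le).le]
    refine (((hT y hy.le).comp y (hw.hasDerivAt hy)).sub (hasDerivAt_id y)).congr_deriv ?_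
    rw [hw', inv_mul_cancel₀ (hw' ▸ (hwpos y hy.le).ne'), sub_self]
  exact sub_eq_zero.1 (by simpa [h0] using eq_of_hasDerivAt_eq_zero_Ioi hcont hderiv hx)

theorem eq_invFunOn_travelTime {G : ℝ → ℝ} {a : ℝ} (hG : ∀ u, HasDerivAt G (-2 * f u) u)
    (hG1 : G 1 = 0) (ha : a < 0) (hpos : ∀ u ∈ Ioo a 1, 0 < G u) {x : ℝ} (hx : 0 ≤ x) :
    w x = Function.invFunOn (travelTime G) (Ioo a 1) x := by
  calc w x = Function.invFunOn (travelTime G) (Ioo a 1) (travelTime G (w x)) :=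
        (invFunOn_travelTime_apply (fun u _ => (hG u).continuousAt.continuousWithinAt) hpos
          ⟨ha, one_pos⟩ ⟨ha.trans_le (hw.mem_Ico hx).1, (hw.mem_Ico hx).2⟩).symm
    _ = Function.invFunOn (travelTime G) (Ioo a 1) x := by
        rw [hw.travelTime_eq hG hG1 ha hpos hx]

end IsMonotoneProfile

theorem Zactive_nonempty {v : ℝ → ℝ} {b L : ℝ} (hb : 0 ≤ b) (hv : ContinuousOn v (Ici 0))
    (hv' : ContinuousOn (deriv v) (Ici 0)) (h0 : v 0 = 0) (hd0 : 0 ≤ deriv v 0) (hL : 0 < L)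
    (hlim : Tendsto v atTop (𝓝 L)) (hlim' : Tendsto (deriv v) atTop (𝓝 0)) :
    (Zactive b v).Nonempty := by
  have hg : Tendsto (fun x => v x - b * deriv v x) atTop (𝓝 L) := by
    simpa using hlim.sub (hlim'.const_mul b)
  obtain ⟨X, hgX, hX⟩ := ((hg.eventually (lt_mem_nhds hL)).and (eventually_ge_atTop 0)).exists
  obtain ⟨x, hx, hgx⟩ := intermediate_value_Icc hX
    ((hv.sub (continuousOn_const.mul hv')).mono Icc_subset_Ici_self)
    (⟨by rw [h0]; nlinarith, hgX.le⟩ : (0:ℝ) ∈ Icc (v 0 - b * deriv v 0) (v X - b * deriv v X))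
  exact ⟨-x, neg_nonpos.2 hx.1, by rw [neg_neg]; exact sub_eq_zero.1 hgx⟩

theorem stmt4 (f : ℝ → ℝ) (α θ lam : ℝ) (hf : CondF f α θ lam) :
    ∃ v : ℝ → ℝ,
      (ContDiffOn ℝ 2 v (Set.Ici 0) ∧ (∀ x ≥ (0:ℝ), deriv (deriv v) x + f (v x) = 0) ∧
        v 0 = 0 ∧ (∀ x ≥ (0:ℝ), 0 < deriv v x) ∧
        Filter.Tendsto v Filter.atTop (nhds 1)) ∧
      (∀ w : ℝ → ℝ,
        (ContDiffOn ℝ 2 w (Set.Ici 0) ∧ (∀ x ≥ (0:ℝ), deriv (deriv w) x + f (w x) = 0) ∧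
          w 0 = 0 ∧ (∀ x ≥ (0:ℝ), 0 < deriv w x) ∧
          Filter.Tendsto w Filter.atTop (nhds 1)) →
        ∀ x ≥ (0:ℝ), w x = v x) ∧
      Fint f 1 < 0 ∧
      (∀ x ≥ (0:ℝ), (deriv v x) ^ 2 = Fint f (v x) - Fint f 1) ∧
      (∀ b ≥ (0:ℝ), (Zactive b v).Nonempty) := by
  obtain ⟨a, ha, hlt⟩ := hf.exists_neg_forall_Ioo_Fint_one_lt
  obtain ⟨K, hK⟩ := hf.exists_Fint_sub_le_mul_sq
  set G : ℝ → ℝ := fun u => Fint f u - Fint f 1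
  have hG : ∀ u, HasDerivAt G (-2 * f u) u := fun u =>
    (hasDerivAt_Fint hf.smooth.continuous u).sub_const _
  have hGc : Continuous G := continuous_iff_continuousAt.2 fun u => (hG u).continuousAt
  have hG1 : G 1 = 0 := sub_self _
  have hpos : ∀ u ∈ Ioo a 1, 0 < G u := fun u hu => sub_pos.2 (hlt u hu)
  have htop : Tendsto (travelTime G) (𝓝[<] 1) atTop := tendsto_travelTime_atTop hGc.continuousOn
    (fun u hu => hpos u ⟨ha.trans_le hu.1, hu.2⟩) hK
  set v := Function.invFunOn (travelTime G) (Ioo a 1)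
  have hv : IsMonotoneProfile f v :=
    isMonotoneProfile_invFunOn_travelTime hf.smooth.continuous hG hpos ha htop
  have ⟨hvC2, _, hv0, hvpos, hvlim⟩ := hv
  have hv' : ∀ x ≥ (0:ℝ), deriv v x = √(G (v x)) := fun x hx =>
    deriv_invFunOn_travelTime hGc.continuousOn hpos ha htop hx
  refine ⟨v, hv, fun w hw x hx =>
    IsMonotoneProfile.eq_invFunOn_travelTime hw hG hG1 ha hpos hx, hf.Fint_one_neg,
    fun x hx => ?_, fun b hb => ?_⟩
  · rw [hv' x hx, Real.sq_sqrt (hpos _ ⟨ha.trans_le (hv.mem_Ico hx).1, (hv.mem_Ico hx).2⟩).le]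
  · have hlim' : Tendsto (deriv v) atTop (𝓝 0) := by
      simpa [hG1] using (((hGc.tendsto 1).comp hvlim).sqrt).congr'
        ((eventually_ge_atTop 0).mono fun x hx => (hv' x hx).symm)
    exact Zactive_nonempty hb hvC2.continuousOn
      (((hGc.comp_continuousOn hvC2.continuousOn).sqrt).congr hv') hv0 (hvpos 0 le_rfl).le
      one_pos hvlim hlim'
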